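/- arXiv:1208.6342 — 2 statements merged into one kernel-verified Lean document; each statement's English description precedes it below -/
import Mathlib

section
/- Let I be a {0,1}-word of length l ≥ 1, and let μ be the run of the Wolfram–Cook Turing machine M whose initial tape τ₀ is given (under the inclusion {0,1} ⊆ Σ_M) by τ₀(c) = u0 for c ≤ −2, τ₀(−1) = 0, τ₀(c) = I(c) for 0 ≤ c < l, and τ₀(c) = 0 for c ≥ l, with initial head position l and initial head state ∘. Then for every i ∈ ℕ there exists a time t ∈ ℕ with h_μ(t) = l + i; that is, the head eventually reaches every cell to the right of I. -/
namespace WolframCook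

/-- Tape alphabet of the Wolfram–Cook Turing machine: `0`, underlined `0`,
`?`, underlined `1`, `1`. -/
inductive Sym : Type
  | zero | uzero | quest | uone | one
  deriving DecidableEq

/-- Head states of the Wolfram–Cook Turing machine. -/
inductive HState : Type
  | circ | bullet
  deriving DecidableEq

/-- A configuration of the Wolfram–Cook Turing machine: a tape, a head
position and a head state. -/
structure Cfg : Type where
  tape : ℤ → Sym
  head : ℤ
  state : HState

/-- The step relation `C ⇝ C'` of the Wolfram–Cook Turing machine. -/
def Step (C C' : Cfg) : Prop :=
  (∀ c : ℤ, c ≠ C.head → C'.tape c = C.tape c) ∧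
  (C'.head = if C.tape C.head = Sym.zero ∨ C.tape C.head = Sym.one
    then C.head - 1 else C.head + 1) ∧
  (C'.state = if C.tape C.head = Sym.one ∨ C.tape C.head = Sym.uone
    then HState.bullet else HState.circ) ∧
  (C.state = HState.circ →
    ((C.tape C.head = Sym.zero ∧ C'.tape C.head = Sym.uzero) ∨
     (C.tape C.head = Sym.one ∧ C'.tape C.head = Sym.uone) ∨
     (C.tape C.head = Sym.uzero ∧ C'.tape C.head = Sym.zero) ∨
     (C.tape C.head = Sym.uone ∧ C'.tape C.head = Sym.one) ∨
     (C.tape C.head = Sym.quest ∧ C'.tape C.head = Sym.zero))) ∧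
  (C.state = HState.bullet →
    ((C.tape C.head = Sym.zero ∧ C'.tape C.head = Sym.uone) ∨
     (C.tape C.head = Sym.one ∧ C'.tape C.head = Sym.quest) ∨
     (C.tape C.head = Sym.uzero ∧ C'.tape C.head = Sym.zero) ∨
     (C.tape C.head = Sym.uone ∧ C'.tape C.head = Sym.one) ∨
     (C.tape C.head = Sym.quest ∧ C'.tape C.head = Sym.one)))


/-- A run of the Wolfram–Cook Turing machine: each configuration steps to
the next. -/
def IsRunM (μ : ℕ → Cfg) : Prop := ∀ t : ℕ, Step (μ t) (μ (t + 1))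

/-- The inclusion of `{0,1}` (as `Bool`) into the tape alphabet. -/
def boolSym : Bool → Sym
  | false => Sym.zero
  | true => Sym.one

/-! The head state only decides which symbol is written; the motion of the head depends on
one bit per cell. Reading `0` or `1` marks the cell (it becomes `u0`, `u1` or `?`) and moves
the head left; reading a marked symbol unmarks it and moves the head right. On the initial
tape the marked cells are exactly those `≤ -2`. In round `n` the head starts at `l + n` with
the cells `≤ -2 - n` marked, sweeps left marking the block `[-1 - n, l + n]`, bounces off cell
`-2 - n`, and sweeps right unmarking `[-2 - n, l + n]`; so round `n + 1` starts at `l + n + 1`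
with one marked cell fewer. -/

def Sym.marked : Sym → Bool
  | .uzero | .uone | .quest => true
  | .zero | .one => false

@[simp]
lemma boolSym_marked (b : Bool) : (boolSym b).marked = false := by
  cases b <;> rfl

def Cfg.marks (C : Cfg) (c : ℤ) : Bool := (C.tape c).marked

namespace Step

variable {C C' : Cfg}

lemma head_eq (h : Step C C') :
    C'.head = if C.marks C.head then C.head + 1 else C.head - 1 := by
  rw [h.2.1, Cfg.marks]
  cases C.tape C.head <;> simp [Sym.marked]

lemma marks_eq (h : Step C C') :
    C'.marks = Function.update C.marks C.head (!C.marks C.head) := by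
  obtain ⟨hframe, -, -, hcirc, hbullet⟩ := h
  funext c
  rcases eq_or_ne c C.head with rfl | hc
  · simp only [Function.update_self, Cfg.marks]
    cases hs : C.state
    · rcases hcirc hs with ⟨ha, hb⟩ | ⟨ha, hb⟩ | ⟨ha, hb⟩ | ⟨ha, hb⟩ | ⟨ha, hb⟩ <;>
        simp [ha, hb, Sym.marked]
    · rcases hbullet hs with ⟨ha, hb⟩ | ⟨ha, hb⟩ | ⟨ha, hb⟩ | ⟨ha, hb⟩ | ⟨ha, hb⟩ <;>
        simp [ha, hb, Sym.marked]
  · simp [Function.update_of_ne hc, Cfg.marks, hframe c hc]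

end Step

section Sweeps

variable {μ : ℕ → Cfg}

lemma sweep_left (hμ : IsRunM μ) (t k : ℕ)
    (hk : ∀ c ∈ Set.Ioc ((μ t).head - k) (μ t).head, (μ t).marks c = false) :
    (μ (t + k)).head = (μ t).head - k ∧
      (μ (t + k)).marks =
        fun c => (μ t).marks c || decide (c ∈ Set.Ioc ((μ t).head - k) (μ t).head) := by
  induction k with
  | zero => simp
  | succ k ih =>
    push_cast at hk ⊢
    obtain ⟨hhead, hmarks⟩ := ih fun c hc => hk c ⟨by grind, hc.2⟩
    have hplain : (μ (t + k)).marks (μ (t + k)).head = false := by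
      rw [hmarks, hhead]
      simpa using hk _ ⟨by omega, by omega⟩
    rw [← add_assoc, (hμ _).head_eq, (hμ _).marks_eq, hplain, hhead, hmarks]
    refine ⟨by simp only [Bool.false_eq_true, if_false]; ring, funext fun c => ?_⟩
    rcases eq_or_ne c ((μ t).head - k) with rfl | hc
    · simp
    · simp only [Function.update_of_ne hc, Set.mem_Ioc]
      grind

lemma sweep_right (hμ : IsRunM μ) (t k : ℕ)
    (hk : ∀ c ∈ Set.Ico (μ t).head ((μ t).head + k), (μ t).marks c = true) :
    (μ (t + k)).head = (μ t).head + k ∧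
      (μ (t + k)).marks =
        fun c => (μ t).marks c && !decide (c ∈ Set.Ico (μ t).head ((μ t).head + k)) := by
  induction k with
  | zero => simp
  | succ k ih =>
    push_cast at hk ⊢
    obtain ⟨hhead, hmarks⟩ := ih fun c hc => hk c ⟨hc.1, by grind⟩
    have hmarked : (μ (t + k)).marks (μ (t + k)).head = true := by
      rw [hmarks, hhead]
      simpa using hk _ ⟨by omega, by omega⟩
    rw [← add_assoc, (hμ _).head_eq, (hμ _).marks_eq, hmarked, hhead, hmarks]
    refine ⟨by simp only [if_true]; ring, funext fun c => ?_⟩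
    rcases eq_or_ne c ((μ t).head + k) with rfl | hc
    · simp
    · simp only [Function.update_of_ne hc, Set.mem_Ico]
      grind

end Sweeps

def RoundStart (μ : ℕ → Cfg) (l n t : ℕ) : Prop :=
  (μ t).head = l + n ∧ (μ t).marks = fun c : ℤ => decide (c ≤ -2 - n)

lemma RoundStart.exists_succ {μ : ℕ → Cfg} (hμ : IsRunM μ) {l n t : ℕ}
    (h : RoundStart μ l n t) : ∃ t', RoundStart μ l (n + 1) t' := by
  obtain ⟨hhead, hmarks⟩ := h
  obtain ⟨hhead₁, hmarks₁⟩ := sweep_left hμ t (l + 2 * n + 2) fun c hc => by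
    rw [hhead] at hc
    simp only [hmarks, Set.mem_Ioc] at hc ⊢
    push_cast at hc
    simp only [decide_eq_false_iff_not]
    omega
  obtain ⟨hhead₂, hmarks₂⟩ := sweep_right hμ (t + (l + 2 * n + 2)) (l + 2 * n + 3) fun c hc => by
    rw [hhead₁, hhead] at hc
    simp only [hmarks₁, hmarks, hhead, Set.mem_Ioc, Set.mem_Ico] at hc ⊢
    push_cast at hc ⊢
    simp only [Bool.or_eq_true, decide_eq_true_eq]
    omega
  refine ⟨t + (l + 2 * n + 2) + (l + 2 * n + 3), ?_, ?_⟩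
  · rw [hhead₂, hhead₁, hhead]
    push_cast
    ring
  · rw [hmarks₂, hmarks₁, hmarks, hhead₁, hhead]
    funext c
    simp only [Set.mem_Ioc, Set.mem_Ico]
    push_cast
    grind

theorem head_reaches_every_right_cell_general (l : ℕ)
    (I : Fin l → Bool) (μ : ℕ → Cfg) (hμ : IsRunM μ)
    (htape₁ : ∀ c : ℤ, c ≤ -2 → (μ 0).tape c = Sym.uzero)
    (htape₂ : (μ 0).tape (-1) = Sym.zero)
    (htape₃ : ∀ j : Fin l, (μ 0).tape (j : ℤ) = boolSym (I j))
    (htape₄ : ∀ c : ℤ, (l : ℤ) ≤ c → (μ 0).tape c = Sym.zero)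
    (hhead : (μ 0).head = (l : ℤ)) :
    ∀ i : ℕ, ∃ t : ℕ, (μ t).head = (l : ℤ) + (i : ℤ) := by
  have hstart : RoundStart μ l 0 0 := by
    refine ⟨by simpa using hhead, funext fun c => ?_⟩
    simp only [Cfg.marks, CharP.cast_eq_zero, sub_zero]
    rcases le_or_gt c (-2) with hc | hc
    · simp [htape₁ c hc, hc, Sym.marked]
    obtain rfl | hc : c = -1 ∨ 0 ≤ c := by omega
    · simp [htape₂, Sym.marked]
    rcases le_or_gt (l : ℤ) c with hcl | hcl
    · simp [htape₄ c hcl, Sym.marked]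
      omega
    · lift c to ℕ using hc
      simp [htape₃ ⟨c, by omega⟩, hc]
  have hrounds : ∀ n, ∃ t, RoundStart μ l n t :=
    Nat.rec ⟨0, hstart⟩ fun _ ⟨_, h⟩ => h.exists_succ hμ
  intro i
  obtain ⟨t, ht⟩ := hrounds i
  exact ⟨t, ht.1⟩

/-- On Wolfram's initial tape `…u0 u0 0 I 0 0…` (with the head starting in
state `∘` on the cell immediately to the right of the input word `I`), the
head of the Wolfram–Cook Turing machine eventually reaches every cell to the
right of `I`. -/
theorem head_reaches_every_right_cell (l : ℕ) (hl : 0 < l)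
    (I : Fin l → Bool) (μ : ℕ → Cfg) (hμ : IsRunM μ)
    (htape₁ : ∀ c : ℤ, c ≤ -2 → (μ 0).tape c = Sym.uzero)
    (htape₂ : (μ 0).tape (-1) = Sym.zero)
    (htape₃ : ∀ j : Fin l, (μ 0).tape (j : ℤ) = boolSym (I j))
    (htape₄ : ∀ c : ℤ, (l : ℤ) ≤ c → (μ 0).tape c = Sym.zero)
    (hhead : (μ 0).head = (l : ℤ))
    (hstate : (μ 0).state = HState.circ) :
    ∀ i : ℕ, ∃ t : ℕ, (μ t).head = (l : ℤ) + (i : ℤ) :=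
  head_reaches_every_right_cell_general l I μ hμ htape₁ htape₂ htape₃ htape₄ hhead

end WolframCook
end

section
/- (Wolfram's limited emulation) Let I be a {0,1}-word of length l ≥ 1. Let ρ be the run of the rule-110 cellular automaton R whose initial state is ρ_0(c) = I(c) for 0 ≤ c < l and ρ_0(c) = 0 otherwise. Let μ be the run of the Wolfram–Cook Turing machine M whose initial tape τ₀ is given by τ₀(c) = u0 for c ≤ −2, τ₀(−1) = 0, τ₀(c) = I(c) for 0 ≤ c < l, and τ₀(c) = 0 for c ≥ l, with initial head position l and initial head state ∘. For i ∈ ℕ let F(i) be the least time t with h_μ(t) = l + i (which exists), and let M(i) = τ_μ(F(i)). Then for every i ∈ ℕ and every cell c ∈ ℤ, M(i)(c) ∈ {0, u0, 1}, and ρ(i,c) = 1 if M(i)(c) = 1 while ρ(i,c) = 0 if M(i)(c) ∈ {0, u0}; that is, the i-th state of R is obtained from M(i) by replacing u0's by 0's. -/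
namespace WolframCook

/-- A run of the rule-110 cellular automaton (cells hold `true`/`false` for
`1`/`0`). -/
def IsRun110 (ρ : ℕ → ℤ → Bool) : Prop :=
  ∀ (t : ℕ) (c : ℤ),
    (ρ (t + 1) c ≠ ρ t c) ↔
      ((ρ t c = false ∧ ρ t (c + 1) = true) ∨
       (ρ t (c - 1) = true ∧ ρ t c = true ∧ ρ t (c + 1) = true))

/-!
The machine works in cycles. At the start of cycle `i` its head sits on cell `l + i`, in state `∘`,
and the tape holds `ρ_i` on the cells `-1 - i, …, l + i`, with `u0`s to the left and `0`s to the
right. A leftward sweep reads `ρ_i` and, because the head state always records the cell just left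
behind, leaves on each cell `c` a mark determined by `ρ_i c` and `ρ_i (c + 1)`: `?` on `1 1`,
otherwise the underlined value `ρ_{i+1} c`. On meeting the first `u0` the head turns, and the
rightward sweep resolves every mark into `ρ_{i+1} c`, the state now recording whether the left
neighbour was `0`, which is exactly what the `?` cells need. The sweep ends on the `0` at
`l + i + 1`, which is then the start of cycle `i + 1`; no earlier time of the cycle has the head
further right than `l + i`, so these start times are the times `F i`.
-/

def rule110 (x y z : Bool) : Bool := if y then !(x && z) else z

theorem IsRun110.succ_eq_rule110 {ρ : ℕ → ℤ → Bool} (hρ : IsRun110 ρ) (t : ℕ) (c : ℤ) :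
    ρ (t + 1) c = rule110 (ρ t (c - 1)) (ρ t c) (ρ t (c + 1)) := by
  have h := hρ t c
  revert h
  generalize ρ (t + 1) c = a, ρ t (c - 1) = x, ρ t c = y, ρ t (c + 1) = z
  decide +revert

theorem IsRun110.eq_false_of_lt_or_le {ρ : ℕ → ℤ → Bool} (hρ : IsRun110 ρ) {a b : ℤ}
    (h₀ : ∀ c, c < a ∨ b ≤ c → ρ 0 c = false) :
    ∀ (t : ℕ) (c : ℤ), c + t < a ∨ b ≤ c → ρ t c = false
  | 0, c, hc => h₀ c (by simpa using hc)
  | t + 1, c, hc => by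
    rw [hρ.succ_eq_rule110, eq_false_of_lt_or_le hρ h₀ t c (by push_cast at hc; omega),
      eq_false_of_lt_or_le hρ h₀ t (c + 1) (by push_cast at hc; omega)]
    rfl

def write : HState → Sym → Sym
  | .circ, .zero => .uzero
  | .circ, .one => .uone
  | .circ, .uzero => .zero
  | .circ, .uone => .one
  | .circ, .quest => .zero
  | .bullet, .zero => .uone
  | .bullet, .one => .quest
  | .bullet, .uzero => .zero
  | .bullet, .uone => .one
  | .bullet, .quest => .one

def stateAfter : Sym → HState
  | .one | .uone => .bullet
  | _ => .circ

def shift : Sym → ℤ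
  | .zero | .one => -1
  | _ => 1

def next (C : Cfg) : Cfg where
  tape := Function.update C.tape C.head (write C.state (C.tape C.head))
  head := C.head + shift (C.tape C.head)
  state := stateAfter (C.tape C.head)

theorem next_mk (τ : ℤ → Sym) (p : ℤ) (q : HState) :
    next ⟨τ, p, q⟩ = ⟨Function.update τ p (write q (τ p)), p + shift (τ p), stateAfter (τ p)⟩ :=
  rfl

theorem Step.eq_next {C C' : Cfg} (h : Step C C') : C' = next C := by
  obtain ⟨τ', h', q'⟩ := C'
  obtain ⟨hτ, hh, hq, hcirc, hbullet⟩ := h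
  dsimp only at hτ hh hq hcirc hbullet
  simp only [next, Cfg.mk.injEq]
  refine ⟨funext fun c => ?_, ?_, ?_⟩
  · rcases eq_or_ne c C.head with rfl | hc
    · rw [Function.update_self]
      cases hs : C.state <;> cases hr : C.tape C.head <;> simp_all [write]
    · rw [Function.update_of_ne hc]
      exact hτ c hc
  · rw [hh]
    cases C.tape C.head <;> simp [shift, sub_eq_add_neg]
  · rw [hq]
    cases C.tape C.head <;> rfl

theorem IsRunM.eq_iterate {μ : ℕ → Cfg} (hμ : IsRunM μ) (s : ℕ) : ∀ k, μ (s + k) = next^[k] (μ s)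
  | 0 => rfl
  | k + 1 => by
    rw [Function.iterate_succ_apply', ← eq_iterate hμ s k]
    exact (hμ (s + k)).eq_next

theorem iterate_eq_of_map_eq_succ {α : Type*} {f : α → α} {g : ℕ → α} {N : ℕ}
    (h : ∀ n < N, f (g n) = g (n + 1)) : ∀ k ≤ N, f^[k] (g 0) = g k
  | 0, _ => rfl
  | k + 1, hk => by
    rw [Function.iterate_succ_apply', iterate_eq_of_map_eq_succ h k (by omega), h k hk]

/-- The mark left by the leftward sweep on a cell holding `y` whose right neighbour holds `z`:
`?` if both are `1`, otherwise the underlined value of the cell at the next time, `y || z`. -/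
def mark (y z : Bool) : Sym := if y && z then .quest else if y || z then .uone else .uzero

theorem write_stateAfter_boolSym (y z : Bool) :
    write (stateAfter (boolSym z)) (boolSym y) = mark y z := by
  cases y <;> cases z <;> rfl

theorem write_stateAfter_mark (x y z : Bool) :
    write (stateAfter (mark x y)) (mark y z) = boolSym (rule110 x y z) := by
  cases x <;> cases y <;> cases z <;> rfl

theorem shift_boolSym (b : Bool) : shift (boolSym b) = -1 := by cases b <;> rfl

theorem shift_mark (y z : Bool) : shift (mark y z) = 1 := by
  cases y <;> cases z <;> rfl

section Emulation

variable (l : ℕ) (ρ : ℕ → ℤ → Bool)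

def leftTape (i : ℕ) (p c : ℤ) : Sym :=
  if c < -1 - i then .uzero
  else if c ≤ p then boolSym (ρ i c)
  else if c ≤ l + i then mark (ρ i c) (ρ i (c + 1))
  else .zero

def rightTape (i : ℕ) (p c : ℤ) : Sym :=
  if c < -2 - i then .uzero
  else if c < p then boolSym (ρ (i + 1) c)
  else if c ≤ l + i then mark (ρ i c) (ρ i (c + 1))
  else .zero

def leftCfg (i : ℕ) (p : ℤ) : Cfg :=
  ⟨leftTape l ρ i p, p, stateAfter (boolSym (ρ i (p + 1)))⟩

def rightCfg (i : ℕ) (p : ℤ) : Cfg :=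
  ⟨rightTape l ρ i p, p, stateAfter (mark (ρ i (p - 1)) (ρ i p))⟩

def cycleLength (i : ℕ) : ℕ := 2 * (l + 2 * i + 2) + 1

def cycleStart : ℕ → ℕ
  | 0 => 0
  | i + 1 => cycleStart i + cycleLength l i

variable {l ρ}

theorem next_leftCfg {i : ℕ} {p : ℤ} (hp₁ : -1 - (i : ℤ) ≤ p) (hp₂ : p ≤ l + i) :
    next (leftCfg l ρ i p) = leftCfg l ρ i (p - 1) := by
  have hread : leftTape l ρ i p p = boolSym (ρ i p) := by
    simp only [leftTape]; split_ifs <;> first | rfl | omega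
  simp only [leftCfg, next_mk, hread, shift_boolSym, write_stateAfter_boolSym, Cfg.mk.injEq,
    sub_add_cancel, ← sub_eq_add_neg, and_true]
  funext c
  rcases eq_or_ne c p with rfl | hc
  · rw [Function.update_self]; simp only [leftTape]; split_ifs <;> first | rfl | omega
  · rw [Function.update_of_ne hc]; simp only [leftTape]; split_ifs <;> first | rfl | omega

theorem next_rightCfg (hρ : IsRun110 ρ) {i : ℕ} {p : ℤ} (hp₁ : -2 - (i : ℤ) ≤ p)
    (hp₂ : p ≤ l + i) : next (rightCfg l ρ i p) = rightCfg l ρ i (p + 1) := by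
  have hread : rightTape l ρ i p p = mark (ρ i p) (ρ i (p + 1)) := by
    simp only [rightTape]; split_ifs <;> first | rfl | omega
  simp only [rightCfg, next_mk, hread, shift_mark, write_stateAfter_mark, ← hρ.succ_eq_rule110,
    Cfg.mk.injEq, add_sub_cancel_right, and_true]
  funext c
  rcases eq_or_ne c p with rfl | hc
  · rw [Function.update_self]; simp only [rightTape]; split_ifs <;> first | rfl | omega
  · rw [Function.update_of_ne hc]; simp only [rightTape]; split_ifs <;> first | rfl | omega

theorem iterate_next_leftCfg (i : ℕ) :
    ∀ k ≤ l + 2 * i + 2, next^[k] (leftCfg l ρ i (l + i)) = leftCfg l ρ i (l + i - k) := by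
  simpa using iterate_eq_of_map_eq_succ (g := fun k : ℕ => leftCfg l ρ i (l + i - k))
    fun n hn => by rw [next_leftCfg (by omega) (by omega)]; push_cast; ring_nf

theorem iterate_next_rightCfg (hρ : IsRun110 ρ) (i : ℕ) :
    ∀ k ≤ l + 2 * i + 2, next^[k] (rightCfg l ρ i (-1 - i)) = rightCfg l ρ i (-1 - i + k) := by
  simpa using iterate_eq_of_map_eq_succ (g := fun k : ℕ => rightCfg l ρ i (-1 - i + k))
    fun n hn => by rw [next_rightCfg hρ (by omega) (by omega)]; push_cast; ring_nf

variable (hsupp : ∀ (t : ℕ) (c : ℤ), c + t < 0 ∨ l ≤ c → ρ t c = false)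
include hsupp

theorem next_leftCfg_turn (i : ℕ) : next (leftCfg l ρ i (-2 - i)) = rightCfg l ρ i (-1 - i) := by
  have hread : leftTape l ρ i (-2 - i) (-2 - i) = .uzero := by
    simp only [leftTape]; split_ifs <;> first | rfl | omega
  have h₁ : ρ i (-2 - i + 1) = false := hsupp _ _ (by omega)
  have h₂ : ρ i (-1 - i - 1) = false := hsupp _ _ (by omega)
  have h₃ : ρ i (-1 - i) = false := hsupp _ _ (by omega)
  have h₄ : ρ (i + 1) (-2 - i) = false := hsupp _ _ (by push_cast; omega)
  simp only [leftCfg, rightCfg, next_mk, hread, h₁, h₂, h₃, Cfg.mk.injEq]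
  refine ⟨funext fun c => ?_, by simp only [shift]; ring, rfl⟩
  rcases eq_or_ne c (-2 - i) with rfl | hc
  · rw [Function.update_self]; simp only [rightTape]; split_ifs <;> first | omega | rw [h₄]; rfl
  · rw [Function.update_of_ne hc]
    simp only [leftTape, rightTape]
    split_ifs <;> first | rfl | omega

theorem rightCfg_eq_leftCfg_succ (i : ℕ) :
    rightCfg l ρ i (l + i + 1) = leftCfg l ρ (i + 1) (l + i + 1) := by
  have h₁ : ρ i (l + i + 1 - 1) = false := hsupp _ _ (by omega)
  have h₂ : ρ i (l + i + 1) = false := hsupp _ _ (by omega)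
  have h₃ : ρ (i + 1) (l + i + 1 + 1) = false := hsupp _ _ (by omega)
  simp only [leftCfg, rightCfg, h₁, h₂, h₃, Cfg.mk.injEq]
  refine ⟨funext fun c => ?_, trivial, rfl⟩
  simp only [leftTape, rightTape]
  push_cast
  split_ifs <;> first | rfl | omega | rw [hsupp (i + 1) c (by omega)]; rfl

theorem iterate_next_cycle (hρ : IsRun110 ρ) (i : ℕ) :
    next^[cycleLength l i] (leftCfg l ρ i (l + i)) = leftCfg l ρ (i + 1) (l + i + 1) ∧
      ∀ k < cycleLength l i, (next^[k] (leftCfg l ρ i (l + i))).head ≤ l + i := by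
  set N := l + 2 * i + 2
  have hturn : next^[N + 1] (leftCfg l ρ i (l + i)) = rightCfg l ρ i (-1 - i) := by
    rw [Function.iterate_succ_apply', iterate_next_leftCfg i N le_rfl, ← next_leftCfg_turn hsupp]
    congr 2
    omega
  have hright : ∀ k ≤ N, next^[k + (N + 1)] (leftCfg l ρ i (l + i)) = rightCfg l ρ i (-1 - i + k) :=
    fun k hk => by rw [Function.iterate_add_apply, hturn, iterate_next_rightCfg hρ i k hk]
  constructor
  · rw [cycleLength, show 2 * N + 1 = N + (N + 1) by omega, hright N le_rfl,
      ← rightCfg_eq_leftCfg_succ hsupp]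
    congr 1
    omega
  · intro k hk
    rcases le_or_gt k N with hkN | hkN
    · rw [iterate_next_leftCfg i k hkN]
      simp only [leftCfg]
      omega
    · obtain ⟨j, rfl⟩ : ∃ j, k = j + (N + 1) := ⟨k - (N + 1), by omega⟩
      rw [hright j (by simp only [cycleLength] at hk; omega)]
      simp only [rightCfg]
      simp only [cycleLength] at hk
      omega

theorem eq_leftCfg_zero {C : Cfg} (h₁ : ∀ c ≤ -2, C.tape c = .uzero)
    (h₂ : ∀ c, -1 ≤ c → C.tape c = boolSym (ρ 0 c)) (hhead : C.head = l)
    (hstate : C.state = .circ) : C = leftCfg l ρ 0 l := by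
  obtain ⟨τ, h, q⟩ := C
  dsimp only at h₁ h₂ hhead hstate
  subst hhead hstate
  simp only [leftCfg, Cfg.mk.injEq, hsupp 0 (l + 1) (by omega), true_and]
  refine ⟨funext fun c => ?_, rfl⟩
  simp only [leftTape]
  split_ifs
  · exact h₁ c (by omega)
  · exact h₂ c (by omega)
  · omega
  · rw [h₂ c (by omega), hsupp 0 c (by omega)]; rfl

theorem IsRunM.eq_leftCfg_cycleStart {μ : ℕ → Cfg} (hμ : IsRunM μ) (hρ : IsRun110 ρ)
    (h₀ : μ 0 = leftCfg l ρ 0 l) : ∀ i, μ (cycleStart l i) = leftCfg l ρ i (l + i) ∧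
      ∀ t < cycleStart l i, (μ t).head < l + i
  | 0 => ⟨by simpa [cycleStart] using h₀, by simp [cycleStart]⟩
  | i + 1 => by
    obtain ⟨hstart, hbefore⟩ := eq_leftCfg_cycleStart hμ hρ h₀ i
    obtain ⟨hcycle, hduring⟩ := iterate_next_cycle hsupp hρ i
    refine ⟨by rw [cycleStart, hμ.eq_iterate, hstart, hcycle]; push_cast; ring_nf, fun t ht => ?_⟩
    rcases lt_or_ge t (cycleStart l i) with hti | hti
    · have := hbefore t hti
      push_cast
      omega
    · obtain ⟨k, rfl⟩ := Nat.exists_eq_add_of_le hti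
      have := hduring k (by simp only [cycleStart] at ht; omega)
      rw [hμ.eq_iterate, hstart]
      push_cast
      omega

theorem leftTape_eq_boolSym_or_eq_uzero (i : ℕ) (c : ℤ) :
    leftTape l ρ i (l + i) c = boolSym (ρ i c) ∨
      leftTape l ρ i (l + i) c = .uzero ∧ ρ i c = false := by
  simp only [leftTape]
  split_ifs
  · exact Or.inr ⟨rfl, hsupp i c (by omega)⟩
  · exact Or.inl rfl
  · rw [hsupp i c (by omega)]; exact Or.inl rfl

end Emulation

/-- (Wolfram's limited emulation.)  Let `ρ` be the rule-110 run whose initial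
state is the word `I` surrounded by `0`s, and let `μ` be the run of the
Wolfram–Cook Turing machine on the initial tape `…u0 u0 0 I 0 0…` with the
head starting in state `∘` on the cell immediately to the right of `I`.  If
`F i` is the least time at which the head is on cell `l + i`, and
`M i = τ_μ(F i)` is the tape at that time, then every symbol of `M i` is
`0`, `u0` or `1`, and the `i`-th state of `ρ` is obtained from `M i` by
replacing `u0`s by `0`s. -/
theorem wolfram_limited_emulation (l : ℕ) (I : Fin l → Bool)
    (ρ : ℕ → ℤ → Bool) (hρ : IsRun110 ρ)
    (hρ0 : ∀ c : ℤ,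
      ρ 0 c = if h : 0 ≤ c ∧ c < (l : ℤ) then I ⟨c.toNat, by omega⟩ else false)
    (μ : ℕ → Cfg) (hμ : IsRunM μ)
    (htape₁ : ∀ c : ℤ, c ≤ -2 → (μ 0).tape c = Sym.uzero)
    (htape₂ : (μ 0).tape (-1) = Sym.zero)
    (htape₃ : ∀ j : Fin l, (μ 0).tape (j : ℤ) = boolSym (I j))
    (htape₄ : ∀ c : ℤ, (l : ℤ) ≤ c → (μ 0).tape c = Sym.zero)
    (hhead : (μ 0).head = (l : ℤ))
    (hstate : (μ 0).state = HState.circ)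
    (F : ℕ → ℕ)
    (hF : ∀ i : ℕ, (μ (F i)).head = (l : ℤ) + (i : ℤ) ∧
      ∀ t : ℕ, (μ t).head = (l : ℤ) + (i : ℤ) → F i ≤ t) :
    ∀ (i : ℕ) (c : ℤ),
      ((μ (F i)).tape c = Sym.zero ∨ (μ (F i)).tape c = Sym.uzero ∨
        (μ (F i)).tape c = Sym.one) ∧
      ((μ (F i)).tape c = Sym.one → ρ i c = true) ∧
      (((μ (F i)).tape c = Sym.zero ∨ (μ (F i)).tape c = Sym.uzero) →
        ρ i c = false) := by
  have hsupp : ∀ (t : ℕ) (c : ℤ), c + t < 0 ∨ l ≤ c → ρ t c = false :=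
    hρ.eq_false_of_lt_or_le fun c hc => by rw [hρ0, dif_neg (by omega)]
  have hinit : ∀ c, -1 ≤ c → (μ 0).tape c = boolSym (ρ 0 c) := by
    intro c hc
    rw [hρ0]
    split_ifs with h
    · obtain ⟨n, rfl⟩ := Int.eq_ofNat_of_zero_le h.1
      simpa using htape₃ ⟨n, by omega⟩
    · rcases eq_or_ne c (-1) with rfl | hc'
      · exact htape₂
      · exact htape₄ c (by omega)
  have hcycles :=
    hμ.eq_leftCfg_cycleStart hsupp hρ (eq_leftCfg_zero hsupp htape₁ hinit hhead hstate)
  have hF_eq : ∀ i, F i = cycleStart l i := fun i =>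
    le_antisymm ((hF i).2 _ (by rw [(hcycles i).1]; rfl))
      (not_lt.1 fun h => ((hcycles i).2 _ h).ne (hF i).1)
  intro i c
  rw [hF_eq, (hcycles i).1]
  rcases leftTape_eq_boolSym_or_eq_uzero hsupp i c with h | ⟨h, hρc⟩
  · simp only [leftCfg, h]
    cases ρ i c <;> simp [boolSym]
  · simp [leftCfg, h, hρc]

end WolframCook
end
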